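/- Let p,q ≥ 0 and n = p+q ≥ 1. Every complete flag F in ℂⁿ belongs to Q_γ for exactly one (p,q)-clan γ; that is, the sets Q_γ, as γ ranges over all (p,q)-clans, partition the set of complete flags in ℂⁿ. -/

import Mathlib

open Finset Module

noncomputable section

/-- Symbols of an FS-pattern: `+`, `-`, `F` (first occurrence / opener),
`S` (second occurrence / closer). -/
inductive FSSymbol : Type
  | plus : FSSymbol
  | minus : FSSymbol
  | fst : FSSymbol
  | snd : FSSymbol
  deriving DecidableEq

/-- A `(p,q)`-clan on `{1,…,p+q}` (positions are `Fin (p+q)`, `0`-based).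
`symbol i = Sum.inl j` means positions `i` and `j` carry the same natural
number (they form an arc), and `symbol i = Sum.inr true` (resp. `false`)
means position `i` carries a `+` (resp. a `-`).  The number of `+`'s minus
the number of `-`'s equals `p - q`. -/
structure Clan (p q : ℕ) where
  symbol : Fin (p + q) → (Fin (p + q)) ⊕ Bool
  mate_ne : ∀ i j, symbol i = Sum.inl j → j ≠ i
  mate_invol : ∀ i j, symbol i = Sum.inl j → symbol j = Sum.inl i
  balance : (univ.filter fun i => symbol i = Sum.inr true).card + q
      = (univ.filter fun i => symbol i = Sum.inr false).card + p

namespace Clan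

variable {p q : ℕ}

/-- `γ(i;+)`: the number of `+` signs and of arcs `(s,t)` with `t ≤ i`
among the first `i` positions (`i` is `1`-based). -/
def cplus (γ : Clan p q) (i : ℕ) : ℕ :=
  (univ.filter fun k : Fin (p + q) =>
    k.val < i ∧ (γ.symbol k = Sum.inr true ∨ ∃ j, γ.symbol k = Sum.inl j ∧ j < k)).card

/-- `γ(i;-)`: the number of `-` signs and of arcs `(s,t)` with `t ≤ i`
among the first `i` positions (`i` is `1`-based). -/
def cminus (γ : Clan p q) (i : ℕ) : ℕ :=
  (univ.filter fun k : Fin (p + q) =>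
    k.val < i ∧ (γ.symbol k = Sum.inr false ∨ ∃ j, γ.symbol k = Sum.inl j ∧ j < k)).card

/-- `γ(i;j)`: the number of arcs `(s,t)` with `s ≤ i < j < t`
(`i`, `j` are `1`-based). -/
def cpair (γ : Clan p q) (i j : ℕ) : ℕ :=
  (univ.filter fun s : Fin (p + q) =>
    s.val < i ∧ ∃ t, γ.symbol s = Sum.inl t ∧ s < t ∧ j ≤ t.val).card

/-- The FS-pattern of a clan: signs stay, openers become `F`, closers `S`. -/
def FS (γ : Clan p q) (i : Fin (p + q)) : FSSymbol :=
  match γ.symbol i with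
  | Sum.inr true => FSSymbol.plus
  | Sum.inr false => FSSymbol.minus
  | Sum.inl j => if j < i then FSSymbol.snd else FSSymbol.fst

/-- A clan avoids the pattern `(1,2,1,2)` iff no two of its arcs cross. -/
def Avoids1212 (γ : Clan p q) : Prop :=
  ¬ ∃ i1 i2 i3 i4 : Fin (p + q), i1 < i2 ∧ i2 < i3 ∧ i3 < i4 ∧
      γ.symbol i1 = Sum.inl i3 ∧ γ.symbol i2 = Sum.inl i4

/-- `γ₊`: positions carrying a `+` or the second occurrence of a number. -/
def plusSet (γ : Clan p q) : Finset (Fin (p + q)) :=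
  univ.filter fun i => γ.symbol i = Sum.inr true ∨ ∃ j, γ.symbol i = Sum.inl j ∧ j < i

/-- `γ̃₊`: positions carrying a `+` or the first occurrence of a number. -/
def tplusSet (γ : Clan p q) : Finset (Fin (p + q)) :=
  univ.filter fun i => γ.symbol i = Sum.inr true ∨ ∃ j, γ.symbol i = Sum.inl j ∧ i < j

end Clan

/-- The rank matrix `r_w(i,j) = #{k ≤ i : w(k) ≤ j}` (`i`, `j` are `1`-based). -/
def rankMatrix {n : ℕ} (w : Equiv.Perm (Fin n)) (i j : ℕ) : ℕ :=
  (univ.filter fun k : Fin n => k.val < i ∧ (w k).val < j).card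

/-- `u` is the permutation `u(γ)`: it assigns the values `p, p-1, …, 1` to the
positions of `γ₊` taken in increasing order, and `n, n-1, …, p+1` to the
positions of `γ₋` taken in increasing order (values are `0`-based, so the
`1`-based value of `u` at `i` is `(u i).val + 1`). -/
def IsUPerm {p q : ℕ} (γ : Clan p q) (u : Equiv.Perm (Fin (p + q))) : Prop :=
  ∀ i : Fin (p + q),
    (i ∈ γ.plusSet → (u i).val + 1 + (γ.plusSet.filter fun j => j < i).card = p) ∧
    (i ∉ γ.plusSet →
      (u i).val + 1 + (univ.filter fun j => j ∉ γ.plusSet ∧ j < i).card = p + q)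

/-- `v` is the permutation `v(γ)`: it assigns the values `1, …, p` to the
positions of `γ̃₊` taken in increasing order, and `p+1, …, n` to the
positions of `γ̃₋` taken in increasing order (values are `0`-based). -/
def IsVPerm {p q : ℕ} (γ : Clan p q) (v : Equiv.Perm (Fin (p + q))) : Prop :=
  ∀ i : Fin (p + q),
    (i ∈ γ.tplusSet → (v i).val = (γ.tplusSet.filter fun j => j < i).card) ∧
    (i ∉ γ.tplusSet →
      (v i).val = p + (univ.filter fun j => j ∉ γ.tplusSet ∧ j < i).card)

/-- `E_j ⊆ ℂⁿ`: the span of the first `j` standard basis vectors, realized as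
the subspace of vectors vanishing in coordinates `≥ j`. -/
def Efirst (n j : ℕ) : Submodule ℂ (Fin n → ℂ) :=
  ⨅ k ∈ {k : Fin n | j ≤ k.val}, LinearMap.ker (LinearMap.proj k : (Fin n → ℂ) →ₗ[ℂ] ℂ)

/-- `Ẽ_j ⊆ ℂⁿ`: the span of the last `j` standard basis vectors, realized as
the subspace of vectors vanishing in coordinates `< n - j`. -/
def Elast (n j : ℕ) : Submodule ℂ (Fin n → ℂ) :=
  ⨅ k ∈ {k : Fin n | k.val < n - j}, LinearMap.ker (LinearMap.proj k : (Fin n → ℂ) →ₗ[ℂ] ℂ)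

/-- The projection `π : ℂⁿ → E_p` with kernel `Ẽ_q` (for `n = p + q`). -/
def projE (n p : ℕ) : (Fin n → ℂ) →ₗ[ℂ] (Fin n → ℂ) where
  toFun v := fun k => if k.val < p then v k else 0
  map_add' u v := by funext k; by_cases h : k.val < p <;> simp [h]
  map_smul' c v := by funext k; by_cases h : k.val < p <;> simp [h]

/-- A complete flag `F_0 ⊂ F_1 ⊂ ⋯ ⊂ F_n` in `ℂⁿ`, `dim F_i = i`. -/
structure CompleteFlag (n : ℕ) where
  F : Fin (n + 1) → Submodule ℂ (Fin n → ℂ)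
  mono : Monotone F
  finrank_eq : ∀ i, finrank ℂ ↥(F i) = i.val

/-- Membership of a complete flag in the set `Q_γ`: the three linear-algebraic
conditions of Theorem `orbit_description`. -/
def MemQ {p q : ℕ} (γ : Clan p q) (Fl : CompleteFlag (p + q)) : Prop :=
  (∀ i : ℕ, 1 ≤ i → ∀ hi : i ≤ p + q,
      finrank ℂ ↥(Fl.F ⟨i, by omega⟩ ⊓ Efirst (p + q) p) = γ.cplus i ∧
      finrank ℂ ↥(Fl.F ⟨i, by omega⟩ ⊓ Elast (p + q) q) = γ.cminus i) ∧
  (∀ i j : ℕ, 1 ≤ i → ∀ hij : i < j, ∀ hj : j ≤ p + q,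
      finrank ℂ ↥((Fl.F ⟨i, by omega⟩).map (projE (p + q) p) ⊔ Fl.F ⟨j, by omega⟩)
        = j + γ.cpair i j)

/-- Membership in `K = GL(p,ℂ) × GL(q,ℂ)`, the block-diagonal subgroup of
`GL(p+q, ℂ)`: all entries mixing the first `p` and last `q` coordinates
vanish. -/
def InK (p q : ℕ) (g : (Matrix (Fin (p + q)) (Fin (p + q)) ℂ)ˣ) : Prop :=
  ∀ i j : Fin (p + q), ¬(i.val < p ↔ j.val < p) →
    (g : Matrix (Fin (p + q)) (Fin (p + q)) ℂ) i j = 0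

/-- `Fl' = g · Fl`: the flag `Fl'` is obtained by applying the invertible
matrix `g` to each subspace of the flag `Fl`. -/
def FlagMapsTo {n : ℕ} (g : (Matrix (Fin n) (Fin n) ℂ)ˣ) (Fl Fl' : CompleteFlag n) : Prop :=
  ∀ i, Fl'.F i = (Fl.F i).map (Matrix.mulVecLin (g : Matrix (Fin n) (Fin n) ℂ))

/-- A partial matching of `{1,…,n}`, given by its set of arcs `(s,t)`, `s < t`;
distinct arcs are disjoint. -/
def IsPartialMatching {n : ℕ} (M : Finset (Fin n × Fin n)) : Prop :=
  (∀ a ∈ M, a.1 < a.2) ∧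
  ∀ a ∈ M, ∀ b ∈ M, a ≠ b → a.1 ≠ b.1 ∧ a.1 ≠ b.2 ∧ a.2 ≠ b.1 ∧ a.2 ≠ b.2

/-- The number of crossing pairs of arcs of `M` (each crossing pair counted
once, ordered by its smaller opener). -/
def crossNum {n : ℕ} (M : Finset (Fin n × Fin n)) : ℕ :=
  ((M ×ˢ M).filter fun ab =>
    ab.1.1 < ab.2.1 ∧ ab.2.1 < ab.1.2 ∧ ab.1.2 < ab.2.2).card

/-- `M` is a noncrossing partial matching whose openers are exactly the
`F`-positions of the pattern `d` and whose closers are exactly the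
`S`-positions of `d`. -/
def MatchesPattern {n : ℕ} (d : Fin n → FSSymbol) (M : Finset (Fin n × Fin n)) : Prop :=
  IsPartialMatching M ∧
  (∀ i : Fin n, (∃ t, (i, t) ∈ M) ↔ d i = FSSymbol.fst) ∧
  (∀ i : Fin n, (∃ s, (s, i) ∈ M) ↔ d i = FSSymbol.snd) ∧
  ¬ ∃ a ∈ M, ∃ b ∈ M, a.1 < b.1 ∧ b.1 < a.2 ∧ a.2 < b.2

/-- The values `{w(1),…,w(i)}` arranged in increasing order. -/
def sortedPrefix {n : ℕ} (w : Equiv.Perm (Fin n)) (i : ℕ) : List (Fin n) :=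
  Finset.sort ((univ.filter fun k : Fin n => k.val < i).image w) (· ≤ ·)

/-!
Write `a_i = dim (F_i ∩ E_p)` and `b_i = dim (F_i ∩ Ẽ_q)`. Each grows by at most one per step,
and since `a_n + b_n = p + q = n`, the positions where both grow (closers) are exactly as many as
those where neither does (openers). The clan of `F` carries `+` (resp. `-`) where only `a`
(resp. only `b`) grows, and joins each closer `k` to the opener `m`, where `m` is the least index
with `F_k ⊆ π(F_m) + F_{k-1}`. Minimality of `m` shows that `m` is an opener (a jump at `m` could
be dropped) and that distinct closers get distinct openers (by an exchange argument), so this is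
a bijection. Since `F_{j+1} ⊆ π(F_i) + F_j` exactly when `j + 1` is a closer whose opener is at
most `i`, downward induction on `j` gives `dim (π(F_i) + F_j) = j + γ(i;j)`.

Conversely, `γ(i;+)` and `γ(i;-)` record at which positions they grow, which fixes the signs and
tells openers from closers; and `γ(i;t-1) - γ(i;t)` says whether the opener of the closer `t`
lies at or before `i`, which fixes the arcs. So `F` lies in exactly one `Q_γ`.
-/

open Submodule

section LinearAlgebra

variable {K V : Type*} [DivisionRing K] [AddCommGroup V] [Module K V]

theorem Submodule.mem_sup_span_singleton_exchange {A : Submodule K V} {x y : V}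
    (hx : x ∈ A ⊔ K ∙ y) (hxA : x ∉ A) : y ∈ A ⊔ K ∙ x := by
  have key := mem_span_insert_exchange (K := K) (s := (A : Set V)) (x := x) (y := y)
  simp only [span_insert, span_eq, sup_comm (K ∙ _)] at key
  exact key hx hxA

variable [FiniteDimensional K V] {A B : Submodule K V}

theorem Submodule.eq_sup_span_singleton_of_finrank_le_succ (hAB : A ≤ B)
    (h : finrank K B ≤ finrank K A + 1) {v : V} (hvB : v ∈ B) (hvA : v ∉ A) :
    B = A ⊔ K ∙ v :=
  (eq_of_le_of_finrank_le (sup_le hAB ((span_singleton_le_iff_mem _ _).2 hvB))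
    (by rw [finrank_sup_span_singleton hvA]; exact h)).symm

theorem Submodule.finrank_inf_le_finrank_inf_succ (hAB : A ≤ B)
    (h : finrank K B ≤ finrank K A + 1) (W : Submodule K V) :
    finrank K ↥(B ⊓ W) ≤ finrank K ↥(A ⊓ W) + 1 := by
  have hmeet : B ⊓ W ⊓ A = A ⊓ W := by
    rw [inf_right_comm, inf_eq_right.2 hAB]
  have hjoin : finrank K ↥(B ⊓ W ⊔ A) ≤ finrank K B :=
    finrank_mono (sup_le inf_le_left hAB)
  have := finrank_sup_add_finrank_inf_eq (B ⊓ W) A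
  rw [hmeet] at this
  omega

theorem Submodule.finrank_inf_eq_succ_iff (hAB : A ≤ B)
    (h : finrank K B ≤ finrank K A + 1) (W : Submodule K V) :
    finrank K ↥(B ⊓ W) = finrank K ↥(A ⊓ W) + 1 ↔ ∃ v ∈ B, v ∈ W ∧ v ∉ A := by
  have hle : A ⊓ W ≤ B ⊓ W := inf_le_inf_right W hAB
  constructor
  · intro hrank
    obtain ⟨v, hvB, hvA⟩ := SetLike.exists_of_lt
      (lt_of_le_of_ne hle fun he => by rw [he] at hrank; omega)
    exact ⟨v, hvB.1, hvB.2, fun hv => hvA ⟨hv, hvB.2⟩⟩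
  · rintro ⟨v, hvB, hvW, hvA⟩
    have hlt : A ⊓ W < B ⊓ W := SetLike.lt_iff_le_and_exists.2
      ⟨hle, v, mem_inf.2 ⟨hvB, hvW⟩, fun hv => hvA (mem_inf.1 hv).1⟩
    have := finrank_lt_finrank_of_lt hlt
    have := finrank_inf_le_finrank_inf_succ hAB h W
    omega

end LinearAlgebra

theorem Finset.card_filter_val_lt_succ {n : ℕ} (s : Finset (Fin n)) (k : Fin n) :
    #(s.filter fun x => x.val < k.val + 1) = #(s.filter fun x => x.val < k.val)
      + if k ∈ s then 1 else 0 := by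
  have hsplit : s.filter (fun x => x.val < k.val + 1)
      = (s.filter fun x => x.val < k.val) ∪ (s.filter fun x => x = k) := by
    ext x
    by_cases hx : x ∈ s
    · simp only [mem_filter, mem_union, Fin.ext_iff, hx, true_and]
      omega
    · simp [hx]
  rw [hsplit, card_union_of_disjoint (disjoint_filter.2 fun x _ hx hxk => by
    rw [hxk] at hx; exact lt_irrefl _ hx), filter_eq']
  split_ifs <;> simp

theorem Finset.eq_of_card_filter_val_lt_eq {n : ℕ} {s t : Finset (Fin n)}
    (h : ∀ i ≤ n, #(s.filter fun x => x.val < i) = #(t.filter fun x => x.val < i)) :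
    s = t := by
  ext k
  have hsucc := h (k.val + 1) k.isLt
  rw [card_filter_val_lt_succ, card_filter_val_lt_succ, h k.val k.isLt.le] at hsucc
  by_cases hs : k ∈ s <;> by_cases ht : k ∈ t <;> simp_all

namespace Clan

variable {p q : ℕ}

section

variable (γ : Clan p q)

def signSet (b : Bool) : Finset (Fin (p + q)) :=
  univ.filter fun k => γ.symbol k = .inr b ∨ ∃ j, γ.symbol k = .inl j ∧ j < k

theorem cplus_eq_card (i : ℕ) : γ.cplus i = #((γ.signSet true).filter fun k => k.val < i) := by
  simp only [cplus, signSet, filter_filter, and_comm]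

theorem cminus_eq_card (i : ℕ) :
    γ.cminus i = #((γ.signSet false).filter fun k => k.val < i) := by
  simp only [cminus, signSet, filter_filter, and_comm]

theorem symbol_eq_inl_comm {s t : Fin (p + q)} : γ.symbol s = .inl t ↔ γ.symbol t = .inl s :=
  ⟨γ.mate_invol s t, γ.mate_invol t s⟩

theorem symbol_eq_inr_iff (k : Fin (p + q)) (b : Bool) :
    γ.symbol k = .inr b ↔ k ∈ γ.signSet b ∧ k ∉ γ.signSet !b := by
  simp only [signSet, mem_filter, mem_univ, true_and]
  rcases γ.symbol k with j | b'
  · simp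
  · cases b <;> cases b' <;> simp

theorem exists_symbol_eq_inl_lt_iff (k : Fin (p + q)) :
    (∃ j, γ.symbol k = .inl j ∧ j < k) ↔ k ∈ γ.signSet true ∧ k ∈ γ.signSet false := by
  simp only [signSet, mem_filter, mem_univ, true_and]
  rcases γ.symbol k with j | b
  · simp
  · cases b <;> simp

theorem cpair_eq_cpair_succ_add (i : ℕ) (t : Fin (p + q)) :
    γ.cpair i t.val = γ.cpair i (t.val + 1)
      + if ∃ m, γ.symbol t = .inl m ∧ m < t ∧ m.val < i then 1 else 0 := by
  have hsplit : (univ.filter fun s : Fin (p + q) =>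
        s.val < i ∧ ∃ u, γ.symbol s = .inl u ∧ s < u ∧ t.val ≤ u.val)
      = (univ.filter fun s : Fin (p + q) =>
          s.val < i ∧ ∃ u, γ.symbol s = .inl u ∧ s < u ∧ t.val + 1 ≤ u.val)
        ∪ univ.filter fun s => γ.symbol t = .inl s ∧ s < t ∧ s.val < i := by
    ext s
    simp only [mem_union, mem_filter, mem_univ, true_and]
    constructor
    · rintro ⟨hs, u, hu, hsu, htu⟩
      rcases Nat.lt_or_eq_of_le htu with htu | htu
      · exact .inl ⟨hs, u, hu, hsu, htu⟩
      · obtain rfl : t = u := Fin.ext htu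
        exact .inr ⟨γ.symbol_eq_inl_comm.1 hu, hsu, hs⟩
    · rintro (⟨hs, u, hu, hsu, htu⟩ | ⟨hu, hsu, hs⟩)
      · exact ⟨hs, u, hu, hsu, by omega⟩
      · exact ⟨hs, t, γ.symbol_eq_inl_comm.2 hu, hsu, le_rfl⟩
  rw [cpair, cpair, hsplit, card_union_of_disjoint]
  · congr 1
    split_ifs with h
    · obtain ⟨m, hm, hmt, hmi⟩ := h
      rw [card_eq_one]
      refine ⟨m, eq_singleton_iff_unique_mem.2 ⟨by simp [hm, hmt, hmi], fun s hs => ?_⟩⟩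
      simp only [mem_filter, hm, Sum.inl.injEq] at hs
      exact hs.2.1.symm
    · exact card_eq_zero.2 (filter_eq_empty_iff.2 fun s _ hs => h ⟨s, hs⟩)
  · refine disjoint_filter.2 fun s _ ⟨_, u, hu, _, htu⟩ ⟨hs, _⟩ => ?_
    rw [γ.symbol_eq_inl_comm.2 hs, Sum.inl.injEq] at hu
    subst hu
    omega

theorem cpair_self (i : ℕ) : γ.cpair i (p + q) = 0 :=
  card_eq_zero.2 (filter_eq_empty_iff.2 fun _ _ ⟨_, u, _, _, hu⟩ => by have := u.isLt; omega)

end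

theorem mate_eq_of_cpair_eq {γ γ' : Clan p q}
    (hpair : ∀ i j, 1 ≤ i → i < j → j ≤ p + q → γ.cpair i j = γ'.cpair i j)
    {t m m' : Fin (p + q)} (hm : γ.symbol t = .inl m) (hmt : m < t)
    (hm' : γ'.symbol t = .inl m') (hmt' : m' < t) : m = m' := by
  by_contra hne
  wlog hlt : m < m' generalizing γ γ' m m'
  · exact this (fun i j h₁ h₂ h₃ => (hpair i j h₁ h₂ h₃).symm) hm' hmt' hm hmt (Ne.symm hne)
      (lt_of_le_of_ne (not_lt.1 hlt) (Ne.symm hne))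
  -- With `i = m + 1`, the arc ending at `t` counts for `γ` but not for `γ'`.
  have hlt' : m.val < m'.val := hlt
  have hmt'' : m'.val < t.val := hmt'
  have hγ := γ.cpair_eq_cpair_succ_add (m.val + 1) t
  have hγ' := γ'.cpair_eq_cpair_succ_add (m.val + 1) t
  rw [if_pos ⟨m, hm, hmt, Nat.lt_succ_self _⟩] at hγ
  rw [if_neg fun ⟨m₀, hm₀, _, hm₀i⟩ => by
    rw [hm', Sum.inl.injEq] at hm₀
    subst hm₀
    omega] at hγ'
  have := hpair (m.val + 1) t.val (by omega) (by omega) t.isLt.le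
  have := hpair (m.val + 1) (t.val + 1) (by omega) (by omega) t.isLt
  omega

theorem ext_of_signSet_eq_of_cpair_eq {γ γ' : Clan p q}
    (hsign : ∀ b, γ.signSet b = γ'.signSet b)
    (hpair : ∀ i j, 1 ≤ i → i < j → j ≤ p + q → γ.cpair i j = γ'.cpair i j) : γ = γ' := by
  have hcloser : ∀ {k j}, γ.symbol k = .inl j → j < k → ∃ j', γ'.symbol k = .inl j' ∧ j' < k :=
    fun {k j} hj hjk => by
      rw [exists_symbol_eq_inl_lt_iff, ← hsign, ← hsign, ← exists_symbol_eq_inl_lt_iff]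
      exact ⟨j, hj, hjk⟩
  have hsymbol : ∀ k, γ.symbol k = γ'.symbol k := by
    intro k
    rcases hk : γ.symbol k with j | b
    · rcases lt_or_gt_of_ne (γ.mate_ne k j hk) with hjk | hkj
      · obtain ⟨j', hj', hj'k⟩ := hcloser hk hjk
        rw [hj', mate_eq_of_cpair_eq hpair hk hjk hj' hj'k]
      · -- `k` opens an arc; its partner `j` closes one in both clans.
        have hj := γ.symbol_eq_inl_comm.1 hk
        obtain ⟨m', hm', hm'j⟩ := hcloser hj hkj
        rw [← mate_eq_of_cpair_eq hpair hj hkj hm' hm'j] at hm'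
        exact (γ'.symbol_eq_inl_comm.1 hm').symm
    · refine ((γ'.symbol_eq_inr_iff k b).2 ?_).symm
      rw [← hsign, ← hsign]
      exact (γ.symbol_eq_inr_iff k b).1 hk
  have := funext hsymbol
  cases γ
  cases γ'
  subst this
  rfl

end Clan

namespace CompleteFlag

variable {n : ℕ} (Fl : CompleteFlag n)

/-- `F_i` for every `i : ℕ`, with `F_i = ℂⁿ` for `i ≥ n`. -/
def nth (i : ℕ) : Submodule ℂ (Fin n → ℂ) :=
  Fl.F ⟨min i n, by omega⟩

theorem monotone_nth : Monotone Fl.nth :=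
  fun _ _ hij => Fl.mono (Fin.mk_le_mk.2 (min_le_min_right n hij))

theorem finrank_nth (i : ℕ) : finrank ℂ (Fl.nth i) = min i n :=
  Fl.finrank_eq _

theorem nth_eq (i : ℕ) (hi : i ≤ n) : Fl.nth i = Fl.F ⟨i, Nat.lt_succ_of_le hi⟩ := by
  simp only [nth, min_eq_left hi]

theorem nth_zero : Fl.nth 0 = ⊥ :=
  finrank_eq_zero.1 (by rw [finrank_nth, Nat.zero_min])

theorem nth_self : Fl.nth n = ⊤ :=
  eq_top_of_finrank_eq (by rw [finrank_nth, min_self, Module.finrank_fin_fun])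

theorem nth_le_succ (k : ℕ) : Fl.nth k ≤ Fl.nth (k + 1) :=
  Fl.monotone_nth k.le_succ

theorem finrank_nth_succ_le (k : ℕ) :
    finrank ℂ (Fl.nth (k + 1)) ≤ finrank ℂ (Fl.nth k) + 1 := by
  rw [finrank_nth, finrank_nth]
  omega

theorem exists_mem_nth_succ_notMem {k : ℕ} (hk : k < n) :
    ∃ v ∈ Fl.nth (k + 1), v ∉ Fl.nth k := by
  refine SetLike.exists_of_lt (lt_of_le_of_ne (Fl.nth_le_succ k) fun he => ?_)
  have := Fl.finrank_nth (k + 1)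
  rw [← he, finrank_nth] at this
  omega

theorem nth_succ_eq_sup {k : ℕ} {v : Fin n → ℂ} (hv : v ∈ Fl.nth (k + 1))
    (hv' : v ∉ Fl.nth k) : Fl.nth (k + 1) = Fl.nth k ⊔ ℂ ∙ v :=
  eq_sup_span_singleton_of_finrank_le_succ (Fl.nth_le_succ k) (Fl.finrank_nth_succ_le k) hv hv'

def jumps (W : Submodule ℂ (Fin n → ℂ)) : Finset (Fin n) :=
  univ.filter fun k =>
    finrank ℂ ↥(Fl.nth (k.val + 1) ⊓ W) = finrank ℂ ↥(Fl.nth k.val ⊓ W) + 1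

theorem mem_jumps_iff (W : Submodule ℂ (Fin n → ℂ)) (k : Fin n) :
    k ∈ Fl.jumps W ↔ ∃ v ∈ Fl.nth (k.val + 1), v ∈ W ∧ v ∉ Fl.nth k.val := by
  rw [jumps, mem_filter, and_iff_right (mem_univ k)]
  exact finrank_inf_eq_succ_iff (Fl.nth_le_succ k) (Fl.finrank_nth_succ_le k) W

theorem finrank_nth_inf_eq_card_jumps (W : Submodule ℂ (Fin n → ℂ)) {i : ℕ} (hi : i ≤ n) :
    finrank ℂ ↥(Fl.nth i ⊓ W) = #((Fl.jumps W).filter fun k => k.val < i) := by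
  induction i with
  | zero => simp [nth_zero]
  | succ i ih =>
    have hstep : finrank ℂ ↥(Fl.nth (i + 1) ⊓ W) = finrank ℂ ↥(Fl.nth i ⊓ W)
        + if (⟨i, hi⟩ : Fin n) ∈ Fl.jumps W then 1 else 0 := by
      have hle := finrank_mono (inf_le_inf_right W (Fl.nth_le_succ i))
      have hge := finrank_inf_le_finrank_inf_succ (Fl.nth_le_succ i) (Fl.finrank_nth_succ_le i) W
      simp only [jumps, mem_filter, mem_univ, true_and]
      split_ifs <;> omega
    rw [hstep, ih (by omega)]
    exact (card_filter_val_lt_succ _ ⟨i, hi⟩).symm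

theorem card_jumps (W : Submodule ℂ (Fin n → ℂ)) : #(Fl.jumps W) = finrank ℂ W := by
  have := Fl.finrank_nth_inf_eq_card_jumps W le_rfl
  rwa [nth_self, top_inf_eq, filter_true_of_mem fun k _ => k.isLt, eq_comm] at this

end CompleteFlag

section Coordinates

variable {n p q : ℕ}

theorem mem_Efirst {j : ℕ} {v : Fin n → ℂ} :
    v ∈ Efirst n j ↔ ∀ k : Fin n, j ≤ k.val → v k = 0 := by
  simp [Efirst, mem_iInf]

theorem mem_Elast {j : ℕ} {v : Fin n → ℂ} :
    v ∈ Elast n j ↔ ∀ k : Fin n, k.val < n - j → v k = 0 := by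
  simp [Elast, mem_iInf]

theorem finrank_Efirst (hp : p ≤ n) : finrank ℂ (Efirst n p) = p := by
  rw [Efirst, (LinearMap.iInfKerProjEquiv ℂ (fun _ : Fin n => ℂ) (I := {k | k.val < p})
    (J := {k | p ≤ k.val}) (Set.disjoint_left.2 fun k h h' => by simp_all; omega)
    (fun k _ => by simp only [Set.mem_union, Set.mem_ofPred_eq]; omega)).finrank_eq,
    Module.finrank_fintype_fun_eq_card]
  exact Fintype.card_fin_lt_of_le hp

theorem finrank_Elast (hq : q ≤ n) : finrank ℂ (Elast n q) = q := by
  rw [Elast, (LinearMap.iInfKerProjEquiv ℂ (fun _ : Fin n => ℂ) (I := {k | n - q ≤ k.val})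
    (J := {k | k.val < n - q}) (Set.disjoint_left.2 fun k h h' => by simp_all; omega)
    (fun k _ => by simp only [Set.mem_union, Set.mem_ofPred_eq]; omega)).finrank_eq,
    Module.finrank_fintype_fun_eq_card, Fintype.card_subtype]
  simp only [Set.mem_ofPred_eq, ← not_lt, filter_not, card_univ_sdiff, Fin.card_filter_val_lt,
    Fintype.card_fin]
  omega

theorem projE_apply (v : Fin n → ℂ) (k : Fin n) :
    projE n p v k = if k.val < p then v k else 0 := rfl

theorem projE_mem_Efirst (v : Fin n → ℂ) : projE n p v ∈ Efirst n p :=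
  mem_Efirst.2 fun k hk => by rw [projE_apply, if_neg (by omega)]

theorem projE_eq_self {v : Fin n → ℂ} (hv : v ∈ Efirst n p) : projE n p v = v := by
  funext k
  rw [projE_apply]
  split_ifs with hk
  · rfl
  · exact (mem_Efirst.1 hv k (by omega)).symm

theorem projE_eq_zero_iff {v : Fin (p + q) → ℂ} :
    projE (p + q) p v = 0 ↔ v ∈ Elast (p + q) q := by
  simp only [mem_Elast, funext_iff, projE_apply, Pi.zero_apply, ite_eq_right_iff,
    Nat.add_sub_cancel]

end Coordinates

namespace CompleteFlag

section Matching

variable (p q : ℕ) (Fl : CompleteFlag (p + q))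

def plusJumps : Finset (Fin (p + q)) := Fl.jumps (Efirst (p + q) p)

def minusJumps : Finset (Fin (p + q)) := Fl.jumps (Elast (p + q) q)

def closers : Finset (Fin (p + q)) := plusJumps p q Fl ∩ minusJumps p q Fl

def openers : Finset (Fin (p + q)) := (plusJumps p q Fl ∪ minusJumps p q Fl)ᶜ

theorem card_plusJumps : #(plusJumps p q Fl) = p :=
  (Fl.card_jumps _).trans (finrank_Efirst (by omega))

theorem card_minusJumps : #(minusJumps p q Fl) = q :=
  (Fl.card_jumps _).trans (finrank_Elast (by omega))

theorem card_openers : #(openers p q Fl) = #(closers p q Fl) := by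
  have := card_union_add_card_inter (plusJumps p q Fl) (minusJumps p q Fl)
  have := card_plusJumps p q Fl
  have := card_minusJumps p q Fl
  rw [openers, closers, card_compl, Fintype.card_fin]
  omega

def matchSet (k : Fin (p + q)) : Set ℕ :=
  {i | Fl.nth (k.val + 1) ≤ (Fl.nth i).map (projE (p + q) p) ⊔ Fl.nth k.val}

/-- For a closer `k`, the opener matched with it sits at the `0`-based position
`matchIdx k - 1`. -/
def matchIdx (k : Fin (p + q)) : ℕ := sInf (matchSet p q Fl k)

variable {p q Fl}

theorem mem_openers {k : Fin (p + q)} :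
    k ∈ openers p q Fl ↔ k ∉ plusJumps p q Fl ∧ k ∉ minusJumps p q Fl := by
  rw [openers, mem_compl, mem_union, not_or]

theorem mem_matchSet {k : Fin (p + q)} {i : ℕ} : i ∈ matchSet p q Fl k ↔
    Fl.nth (k.val + 1) ≤ (Fl.nth i).map (projE (p + q) p) ⊔ Fl.nth k.val :=
  Iff.rfl

theorem mem_matchSet_of_le {k : Fin (p + q)} {i i' : ℕ} (hii' : i ≤ i')
    (hi : i ∈ matchSet p q Fl k) : i' ∈ matchSet p q Fl k :=
  (mem_matchSet.1 hi).trans (sup_le_sup_right (map_mono (Fl.monotone_nth hii')) _)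

theorem mem_matchSet_of_mem_sup {k : Fin (p + q)} {i : ℕ} {v : Fin (p + q) → ℂ}
    (hv : v ∈ Fl.nth (k.val + 1)) (hv' : v ∉ Fl.nth k.val)
    (hvi : v ∈ (Fl.nth i).map (projE (p + q) p) ⊔ Fl.nth k.val) : i ∈ matchSet p q Fl k := by
  rw [mem_matchSet, Fl.nth_succ_eq_sup hv hv']
  exact sup_le le_sup_right ((span_singleton_le_iff_mem _ _).2 hvi)

theorem mem_matchSet_of_succ_mem {k : Fin (p + q)} {i : ℕ} (hi : i + 1 ∈ matchSet p q Fl k)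
    {v : Fin (p + q) → ℂ} (hv : v ∈ Fl.nth (i + 1)) (hv' : v ∉ Fl.nth i)
    (hπv : projE (p + q) p v ∈ (Fl.nth i).map (projE (p + q) p) ⊔ Fl.nth k.val) :
    i ∈ matchSet p q Fl k := by
  refine (mem_matchSet.1 hi).trans (sup_le ?_ le_sup_right)
  rw [Fl.nth_succ_eq_sup hv hv', Submodule.map_sup, map_span, Set.image_singleton]
  exact sup_le le_sup_left ((span_singleton_le_iff_mem _ _).2 hπv)

theorem mem_matchSet_self {k : Fin (p + q)} (hk : k ∈ closers p q Fl) :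
    k.val ∈ matchSet p q Fl k := by
  obtain ⟨hplus, hminus⟩ := mem_inter.1 hk
  obtain ⟨e, he, heE, he'⟩ := (Fl.mem_jumps_iff _ k).1 hplus
  obtain ⟨f, hf, hfE, hf'⟩ := (Fl.mem_jumps_iff _ k).1 hminus
  -- `e ≡ c • f` modulo `F_k`, and `π` kills `f`, so `e = π e ∈ π(F_k)`.
  obtain ⟨w, hw, z, hz, rfl⟩ := mem_sup.1 (Fl.nth_succ_eq_sup hf hf' ▸ he)
  obtain ⟨c, rfl⟩ := mem_span_singleton.1 hz
  have hπ : projE (p + q) p (w + c • f) = projE (p + q) p w := by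
    rw [map_add, map_smul, projE_eq_zero_iff.2 hfE, smul_zero, add_zero]
  rw [projE_eq_self heE] at hπ
  exact mem_matchSet_of_mem_sup he he' (mem_sup_left (hπ ▸ mem_map_of_mem hw))

theorem mem_closers_of_mem_matchSet {k : Fin (p + q)} {i : ℕ} (hik : i ≤ k.val)
    (hi : i ∈ matchSet p q Fl k) : k ∈ closers p q Fl := by
  obtain ⟨v, hv, hv'⟩ := Fl.exists_mem_nth_succ_notMem k.isLt
  obtain ⟨_, ⟨x, hx, rfl⟩, w, hw, hsum⟩ := mem_sup.1 (hi hv)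
  have hxk : x ∈ Fl.nth k.val := Fl.monotone_nth hik hx
  have hwk : w ∈ Fl.nth (k.val + 1) := Fl.nth_le_succ k.val hw
  -- `e = π x` and `f = x - π x` both leave `F_k` at step `k`.
  have he' : projE (p + q) p x ∉ Fl.nth k.val := fun h => hv' (hsum ▸ add_mem h hw)
  have he : projE (p + q) p x ∈ Fl.nth (k.val + 1) := by
    rw [eq_sub_of_add_eq hsum]; exact sub_mem hv hwk
  have hf : x - projE (p + q) p x ∈ Elast (p + q) q := by
    rw [← projE_eq_zero_iff, map_sub, projE_eq_self (projE_mem_Efirst x), sub_self]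
  refine mem_inter.2 ⟨(Fl.mem_jumps_iff _ k).2 ⟨_, he, projE_mem_Efirst x, he'⟩,
    (Fl.mem_jumps_iff _ k).2 ⟨_, sub_mem (Fl.nth_le_succ k.val hxk) he, hf, fun h => he' ?_⟩⟩
  simpa using sub_mem hxk h

theorem mem_matchSet_iff {k : Fin (p + q)} {i : ℕ} (hik : i ≤ k.val) :
    i ∈ matchSet p q Fl k ↔ k ∈ closers p q Fl ∧ matchIdx p q Fl k ≤ i :=
  ⟨fun hi => ⟨mem_closers_of_mem_matchSet hik hi, Nat.sInf_le hi⟩,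
    fun ⟨hk, hle⟩ => mem_matchSet_of_le hle (Nat.sInf_mem ⟨_, mem_matchSet_self hk⟩)⟩

theorem matchIdx_mem {k : Fin (p + q)} (hk : k ∈ closers p q Fl) :
    matchIdx p q Fl k ∈ matchSet p q Fl k :=
  Nat.sInf_mem ⟨_, mem_matchSet_self hk⟩

theorem matchIdx_le {k : Fin (p + q)} (hk : k ∈ closers p q Fl) : matchIdx p q Fl k ≤ k.val :=
  Nat.sInf_le (mem_matchSet_self hk)

theorem zero_notMem_matchSet (k : Fin (p + q)) : 0 ∉ matchSet p q Fl k := by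
  intro h
  have hle : Fl.nth (k.val + 1) ≤ Fl.nth k.val := by
    simpa [matchSet, nth_zero] using h
  have := finrank_mono hle
  rw [finrank_nth, finrank_nth] at this
  omega

theorem one_le_matchIdx {k : Fin (p + q)} (hk : k ∈ closers p q Fl) : 1 ≤ matchIdx p q Fl k :=
  Nat.one_le_iff_ne_zero.2 fun h => zero_notMem_matchSet k (h ▸ matchIdx_mem hk)

theorem matchIdx_sub_one_mem_openers {k : Fin (p + q)} (hk : k ∈ closers p q Fl) :
    (⟨matchIdx p q Fl k - 1, by have := matchIdx_le hk; omega⟩ : Fin (p + q))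
      ∈ openers p q Fl := by
  obtain ⟨i, hi⟩ : ∃ i, matchIdx p q Fl k = i + 1 :=
    ⟨_, (Nat.succ_pred_eq_of_pos (one_le_matchIdx hk)).symm⟩
  have hik : i + 1 ≤ k.val := hi ▸ matchIdx_le hk
  have hmem : i + 1 ∈ matchSet p q Fl k := hi ▸ matchIdx_mem hk
  -- A jump at step `i` would let `i` itself into the match set.
  have hmin : i ∉ matchSet p q Fl k :=
    Nat.notMem_of_lt_sInf (show i < matchIdx p q Fl k by omega)
  simp only [hi, Nat.add_sub_cancel, mem_openers, plusJumps, minusJumps, mem_jumps_iff]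
  constructor
  · rintro ⟨e, he, heE, he'⟩
    refine hmin (mem_matchSet_of_succ_mem hmem he he' (mem_sup_right ?_))
    rw [projE_eq_self heE]
    exact Fl.monotone_nth hik he
  · rintro ⟨f, hf, hfE, hf'⟩
    refine hmin (mem_matchSet_of_succ_mem hmem hf hf' ?_)
    rw [projE_eq_zero_iff.2 hfE]
    exact zero_mem _

theorem matchIdx_injOn : Set.InjOn (matchIdx p q Fl) (closers p q Fl) := by
  intro k hk k' hk' heq
  by_contra hne
  wlog hlt : k < k' generalizing k k'
  · exact this hk' hk heq.symm (Ne.symm hne) (lt_of_le_of_ne (not_lt.1 hlt) (Ne.symm hne))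
  obtain ⟨i, hi⟩ : ∃ i, matchIdx p q Fl k = i + 1 :=
    ⟨_, (Nat.succ_pred_eq_of_pos (one_le_matchIdx hk)).symm⟩
  have hmin : ∀ {l}, matchIdx p q Fl l = i + 1 → i ∉ matchSet p q Fl l :=
    fun hl => Nat.notMem_of_lt_sInf (show i < matchIdx p q Fl _ by omega)
  obtain ⟨x, hx, hx'⟩ := Fl.exists_mem_nth_succ_notMem (n := p + q) (k := i)
    (by have := matchIdx_le hk; omega)
  obtain ⟨v, hv, hv'⟩ := Fl.exists_mem_nth_succ_notMem k.isLt
  have hsplit : (Fl.nth (i + 1)).map (projE (p + q) p) ⊔ Fl.nth k.val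
      = (Fl.nth i).map (projE (p + q) p) ⊔ Fl.nth k.val ⊔ ℂ ∙ projE (p + q) p x := by
    rw [Fl.nth_succ_eq_sup hx hx', Submodule.map_sup, map_span, Set.image_singleton,
      sup_right_comm]
  have hvx : v ∈ _ := mem_matchSet.1 (hi ▸ matchIdx_mem hk) hv
  rw [hsplit] at hvx
  have hvi : v ∉ (Fl.nth i).map (projE (p + q) p) ⊔ Fl.nth k.val :=
    fun h => hmin hi (mem_matchSet_of_mem_sup hv hv' h)
  -- Exchange `v` for `π x`; then `x` is superfluous for `k'` as well.
  have hπx := mem_sup_span_singleton_exchange hvx hvi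
  have hi' : matchIdx p q Fl k' = i + 1 := heq ▸ hi
  have hkk' : k.val + 1 ≤ k'.val := hlt
  refine hmin hi' (mem_matchSet_of_succ_mem (hi' ▸ matchIdx_mem hk') hx hx' ?_)
  refine sup_le (sup_le le_sup_left (le_sup_of_le_right (Fl.monotone_nth (by omega))))
    (le_sup_of_le_right ((span_singleton_le_iff_mem _ _).2 (Fl.monotone_nth hkk' hv))) hπx

end Matching

section ClanOfFlag

variable (p q : ℕ) (Fl : CompleteFlag (p + q))

def matching : closers p q Fl ≃ openers p q Fl :=
  Equiv.ofBijective
    (fun k => ⟨⟨matchIdx p q Fl k - 1, by have := matchIdx_le k.2; omega⟩,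
      matchIdx_sub_one_mem_openers k.2⟩)
    ((Fintype.bijective_iff_injective_and_card _).2
      ⟨fun k k' h => Subtype.ext <| matchIdx_injOn k.2 k'.2 <| by
        have := one_le_matchIdx k.2
        have := one_le_matchIdx k'.2
        simp only [Subtype.mk.injEq, Fin.mk.injEq] at h
        omega,
      by simp only [Fintype.card_coe, card_openers]⟩)

def clanSymbol (k : Fin (p + q)) : Fin (p + q) ⊕ Bool :=
  if hc : k ∈ closers p q Fl then .inl (matching p q Fl ⟨k, hc⟩)
  else if ho : k ∈ openers p q Fl then .inl ((matching p q Fl).symm ⟨k, ho⟩)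
  else .inr (decide (k ∈ plusJumps p q Fl))

variable {p q Fl}

theorem matching_val (k : closers p q Fl) :
    (matching p q Fl k : Fin (p + q)).val = matchIdx p q Fl k - 1 := rfl

theorem matching_lt (k : closers p q Fl) : (matching p q Fl k : Fin (p + q)) < k := by
  have := one_le_matchIdx k.2
  have := matchIdx_le k.2
  rw [Fin.lt_def, matching_val]
  omega

theorem matching_val_lt_iff (k : closers p q Fl) (i : ℕ) :
    (matching p q Fl k : Fin (p + q)).val < i ↔ matchIdx p q Fl k ≤ i := by
  have := one_le_matchIdx k.2
  rw [matching_val]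
  omega

theorem notMem_closers_of_mem_openers {k : Fin (p + q)} (ho : k ∈ openers p q Fl) :
    k ∉ closers p q Fl := fun hc => (mem_openers.1 ho).1 (mem_inter.1 hc).1

theorem clanSymbol_of_mem_closers {k : Fin (p + q)} (hc : k ∈ closers p q Fl) :
    clanSymbol p q Fl k = .inl (matching p q Fl ⟨k, hc⟩) :=
  dif_pos hc

theorem clanSymbol_of_mem_openers {k : Fin (p + q)} (ho : k ∈ openers p q Fl) :
    clanSymbol p q Fl k = .inl ((matching p q Fl).symm ⟨k, ho⟩) := by
  rw [clanSymbol, dif_neg (notMem_closers_of_mem_openers ho), dif_pos ho]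

theorem lt_matching_symm (k : openers p q Fl) : k < ((matching p q Fl).symm k : Fin (p + q)) := by
  simpa using matching_lt ((matching p q Fl).symm k)

theorem clanSymbol_of_notMem {k : Fin (p + q)} (hc : k ∉ closers p q Fl)
    (ho : k ∉ openers p q Fl) :
    clanSymbol p q Fl k = .inr (decide (k ∈ plusJumps p q Fl)) := by
  rw [clanSymbol, dif_neg hc, dif_neg ho]

theorem clanSymbol_mate {k j : Fin (p + q)} (h : clanSymbol p q Fl k = .inl j) :
    clanSymbol p q Fl j = .inl k ∧ j ≠ k := by
  by_cases hc : k ∈ closers p q Fl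
  · rw [clanSymbol_of_mem_closers hc, Sum.inl.injEq] at h
    subst h
    refine ⟨?_, (matching_lt _).ne⟩
    rw [clanSymbol_of_mem_openers (matching p q Fl _).2]
    simp
  by_cases ho : k ∈ openers p q Fl
  · rw [clanSymbol_of_mem_openers ho, Sum.inl.injEq] at h
    subst h
    refine ⟨?_, (lt_matching_symm _).ne'⟩
    rw [clanSymbol_of_mem_closers ((matching p q Fl).symm _).2]
    simp
  rw [clanSymbol_of_notMem hc ho] at h
  cases h

theorem clanSymbol_eq_inr_iff {k : Fin (p + q)} {b : Bool} :
    clanSymbol p q Fl k = .inr b ↔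
      k ∈ (if b then plusJumps p q Fl \ minusJumps p q Fl
        else minusJumps p q Fl \ plusJumps p q Fl) := by
  by_cases hc : k ∈ closers p q Fl
  · rw [clanSymbol_of_mem_closers hc]
    have := mem_inter.1 hc
    cases b <;> simp [this]
  by_cases ho : k ∈ openers p q Fl
  · rw [clanSymbol_of_mem_openers ho]
    have := mem_openers.1 ho
    cases b <;> simp [this]
  rw [clanSymbol_of_notMem hc ho]
  rw [closers, mem_inter] at hc
  rw [mem_openers] at ho
  cases b <;> by_cases hk : k ∈ plusJumps p q Fl <;> simp_all

theorem exists_clanSymbol_eq_inl_lt_iff (k : Fin (p + q)) :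
    (∃ j, clanSymbol p q Fl k = .inl j ∧ j < k) ↔ k ∈ closers p q Fl := by
  refine ⟨fun ⟨j, hj, hjk⟩ => ?_, fun hc => ⟨_, clanSymbol_of_mem_closers hc, matching_lt _⟩⟩
  by_contra hc
  by_cases ho : k ∈ openers p q Fl
  · rw [clanSymbol_of_mem_openers ho, Sum.inl.injEq] at hj
    exact (lt_matching_symm ⟨k, ho⟩).not_gt (hj ▸ hjk)
  · rw [clanSymbol_of_notMem hc ho] at hj
    cases hj

variable (p q Fl) in
def clanOf : Clan p q where
  symbol := clanSymbol p q Fl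
  mate_ne _ _ h := (clanSymbol_mate h).2
  mate_invol _ _ h := (clanSymbol_mate h).1
  balance := by
    simp only [clanSymbol_eq_inr_iff, if_true, Bool.false_eq_true, if_false, filter_mem_eq_inter,
      univ_inter]
    have := card_sdiff_add_card_inter (plusJumps p q Fl) (minusJumps p q Fl)
    have := inter_comm (minusJumps p q Fl) (plusJumps p q Fl) ▸
      card_sdiff_add_card_inter (minusJumps p q Fl) (plusJumps p q Fl)
    have := card_plusJumps p q Fl
    have := card_minusJumps p q Fl
    omega

theorem clanOf_symbol : (clanOf p q Fl).symbol = clanSymbol p q Fl := rfl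

theorem signSet_clanOf_true : (clanOf p q Fl).signSet true = plusJumps p q Fl := by
  ext k
  rw [Clan.signSet, mem_filter, clanOf_symbol, clanSymbol_eq_inr_iff,
    exists_clanSymbol_eq_inl_lt_iff, closers]
  simp only [mem_univ, if_true, mem_sdiff, mem_inter, true_and]
  tauto

theorem signSet_clanOf_false : (clanOf p q Fl).signSet false = minusJumps p q Fl := by
  ext k
  rw [Clan.signSet, mem_filter, clanOf_symbol, clanSymbol_eq_inr_iff,
    exists_clanSymbol_eq_inl_lt_iff, closers]
  simp only [mem_univ, Bool.false_eq_true, if_false, mem_sdiff, mem_inter, true_and]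
  tauto

theorem exists_clanOf_symbol_eq_inl_lt_iff (i : ℕ) (t : Fin (p + q)) :
    (∃ m, (clanOf p q Fl).symbol t = .inl m ∧ m < t ∧ m.val < i) ↔
      t ∈ closers p q Fl ∧ matchIdx p q Fl t ≤ i := by
  constructor
  · rintro ⟨m, hm, hmt, hmi⟩
    have hc := (exists_clanSymbol_eq_inl_lt_iff t).1 ⟨m, hm, hmt⟩
    rw [clanOf_symbol, clanSymbol_of_mem_closers hc, Sum.inl.injEq] at hm
    rw [← hm, matching_val_lt_iff] at hmi
    exact ⟨hc, hmi⟩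
  · rintro ⟨hc, hle⟩
    exact ⟨_, clanSymbol_of_mem_closers hc, matching_lt _, (matching_val_lt_iff _ i).2 hle⟩

theorem map_projE_sup_nth_succ_of_mem {i : ℕ} {j : Fin (p + q)} (hi : i ∈ matchSet p q Fl j) :
    (Fl.nth i).map (projE (p + q) p) ⊔ Fl.nth (j.val + 1)
      = (Fl.nth i).map (projE (p + q) p) ⊔ Fl.nth j.val :=
  le_antisymm (sup_le le_sup_left hi) (sup_le_sup_left (Fl.nth_le_succ _) _)

theorem finrank_map_projE_sup_nth_succ_of_notMem {i : ℕ} {j : Fin (p + q)}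
    (hi : i ∉ matchSet p q Fl j) :
    finrank ℂ ↥((Fl.nth i).map (projE (p + q) p) ⊔ Fl.nth (j.val + 1))
      = finrank ℂ ↥((Fl.nth i).map (projE (p + q) p) ⊔ Fl.nth j.val) + 1 := by
  obtain ⟨v, hv, hv'⟩ := Fl.exists_mem_nth_succ_notMem j.isLt
  rw [Fl.nth_succ_eq_sup hv hv', ← sup_assoc,
    finrank_sup_span_singleton fun h => hi (mem_matchSet_of_mem_sup hv hv' h)]

theorem finrank_map_projE_sup_nth {i j : ℕ} (hij : i < j) (hj : j ≤ p + q) :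
    finrank ℂ ↥((Fl.nth i).map (projE (p + q) p) ⊔ Fl.nth j)
      = j + (clanOf p q Fl).cpair i j := by
  induction hj using Nat.decreasingInduction with
  | self => rw [nth_self, sup_top_eq, finrank_top, Module.finrank_fin_fun, Clan.cpair_self,
      add_zero]
  | of_succ j hj ih =>
    have hpair : (clanOf p q Fl).cpair i j = (clanOf p q Fl).cpair i (j + 1) + _ :=
      (clanOf p q Fl).cpair_eq_cpair_succ_add i ⟨j, hj⟩
    have hiff := (exists_clanOf_symbol_eq_inl_lt_iff i ⟨j, hj⟩).trans
      (mem_matchSet_iff (Fl := Fl) (k := ⟨j, hj⟩) hij.le).symm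
    have := ih (by omega)
    by_cases hi : i ∈ matchSet p q Fl ⟨j, hj⟩
    · rw [if_pos (hiff.2 hi)] at hpair
      rw [map_projE_sup_nth_succ_of_mem hi, Fin.val_mk] at this
      omega
    · rw [if_neg (mt hiff.1 hi)] at hpair
      rw [finrank_map_projE_sup_nth_succ_of_notMem hi, Fin.val_mk] at this
      omega

theorem memQ_clanOf : MemQ (clanOf p q Fl) Fl := by
  refine ⟨fun i _ hi => ⟨?_, ?_⟩, fun i j _ hij hj => ?_⟩
  · rw [← Fl.nth_eq i hi, Clan.cplus_eq_card, signSet_clanOf_true, plusJumps,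
      finrank_nth_inf_eq_card_jumps _ _ hi]
  · rw [← Fl.nth_eq i hi, Clan.cminus_eq_card, signSet_clanOf_false, minusJumps,
      finrank_nth_inf_eq_card_jumps _ _ hi]
  · rw [← Fl.nth_eq i (by omega), ← Fl.nth_eq j hj, finrank_map_projE_sup_nth hij hj]

end ClanOfFlag

end CompleteFlag

theorem MemQ.eq {p q : ℕ} {γ γ' : Clan p q} {Fl : CompleteFlag (p + q)} (h : MemQ γ Fl)
    (h' : MemQ γ' Fl) : γ = γ' := by
  refine Clan.ext_of_signSet_eq_of_cpair_eq
    (fun b => eq_of_card_filter_val_lt_eq fun i hi => ?_) fun i j hi hij hj => ?_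
  · rcases Nat.eq_zero_or_pos i with rfl | hi₀
    · simp
    cases b
    · rw [← Clan.cminus_eq_card, ← Clan.cminus_eq_card, ← (h.1 i hi₀ hi).2, (h'.1 i hi₀ hi).2]
    · rw [← Clan.cplus_eq_card, ← Clan.cplus_eq_card, ← (h.1 i hi₀ hi).1, (h'.1 i hi₀ hi).1]
  · have := h.2 i j hi hij hj
    have := h'.2 i j hi hij hj
    omega

theorem Qclan_partition_general {p q : ℕ} (Fl : CompleteFlag (p + q)) :
    ∃! γ : Clan p q, MemQ γ Fl :=
  ⟨CompleteFlag.clanOf p q Fl, CompleteFlag.memQ_clanOf,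
    fun _ hγ => hγ.eq CompleteFlag.memQ_clanOf⟩

/-- The sets `Q_γ`, as `γ` ranges over all `(p,q)`-clans,
partition the set of complete flags in `ℂⁿ`: every complete flag lies in
`Q_γ` for exactly one `(p,q)`-clan `γ`. -/
theorem Qclan_partition {p q : ℕ} (hn : 1 ≤ p + q) (Fl : CompleteFlag (p + q)) :
    ∃! γ : Clan p q, MemQ γ Fl :=
  Qclan_partition_general Fl
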